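/- arXiv:2401.16270 — 9 statements merged into one kernel-verified Lean document; each statement's English description precedes it below -/
import Mathlib

section
/- Let x₁⁻ = max(x⁻, v⁻ − y⁺, y⁻ − u⁺, (v⁻ − u⁺)/2), x₁⁺ = min(x⁺, v⁺ − y⁻, y⁺ − u⁻, (v⁺ − u⁻)/2), y₁⁻ = max(y⁻, u⁻ + x⁻, v⁻ − x⁺, (u⁻ + v⁻)/2), y₁⁺ = min(y⁺, u⁺ + x⁺, v⁺ − x⁻, (u⁺ + v⁺)/2), u₁⁻ = max(u⁻, y⁻ − x⁺, v⁻ − 2x⁺, 2y⁻ − v⁺), u₁⁺ = min(u⁺, y⁺ − x⁻, v⁺ − 2x⁻, 2y⁺ − v⁻), v₁⁻ = max(v⁻, x⁻ + y⁻, u⁻ + 2x⁻, 2y⁻ − u⁺), v₁⁺ = min(v⁺, x⁺ + y⁺, u⁺ + 2x⁺, 2y⁺ − u⁻). Then Octa(x⁻,x⁺,y⁻,y⁺,u⁻,u⁺,v⁻,v⁺) = Octa(x₁⁻,x₁⁺,y₁⁻,y₁⁺,u₁⁻,u₁⁺,v₁⁻,v₁⁺). -/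
def Octa (xm xp ym yp um up vm vp : ℝ) : Set (ℝ × ℝ) :=
  {p : ℝ × ℝ | um ≤ p.2 - p.1 ∧ p.2 - p.1 ≤ up ∧ vm ≤ p.1 + p.2 ∧ p.1 + p.2 ≤ vp ∧
    xm ≤ p.1 ∧ p.1 ≤ xp ∧ ym ≤ p.2 ∧ p.2 ≤ yp}

theorem stmt1 (xm xp ym yp um up vm vp : ℝ) :
    Octa xm xp ym yp um up vm vp =
      Octa (max xm (max (vm - yp) (max (ym - up) ((vm - up) / 2))))
           (min xp (min (vp - ym) (min (yp - um) ((vp - um) / 2))))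
           (max ym (max (um + xm) (max (vm - xp) ((um + vm) / 2))))
           (min yp (min (up + xp) (min (vp - xm) ((up + vp) / 2))))
           (max um (max (ym - xp) (max (vm - 2 * xp) (2 * ym - vp))))
           (min up (min (yp - xm) (min (vp - 2 * xm) (2 * yp - vm))))
           (max vm (max (xm + ym) (max (um + 2 * xm) (2 * ym - up))))
           (min vp (min (xp + yp) (min (up + 2 * xp) (2 * yp - um)))) := by
  ext ⟨x, y⟩
  simp only [Octa, Set.mem_setOf_eq, max_le_iff, le_min_iff]
  constructor
  · rintro ⟨h1, h2, h3, h4, h5, h6, h7, h8⟩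
    refine ⟨⟨?_,?_,?_,?_⟩,⟨?_,?_,?_,?_⟩,⟨?_,?_,?_,?_⟩,⟨?_,?_,?_,?_⟩,⟨?_,?_,?_,?_⟩,⟨?_,?_,?_,?_⟩,⟨?_,?_,?_,?_⟩,⟨?_,?_,?_,?_⟩⟩ <;> linarith
  · rintro ⟨⟨h1,_,_,_⟩,⟨h2,_,_,_⟩,⟨h3,_,_,_⟩,⟨h4,_,_,_⟩,⟨h5,_,_,_⟩,⟨h6,_,_,_⟩,⟨h7,_,_,_⟩,⟨h8,_,_,_⟩⟩
    exact ⟨h1,h2,h3,h4,h5,h6,h7,h8⟩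
end

section
/- If the parameters of an octagon O = Octa(x⁻,x⁺,y⁻,y⁺,u⁻,u⁺,v⁻,v⁺) are normalised and satisfy x⁻ ≤ x⁺, y⁻ ≤ y⁺, u⁻ ≤ u⁺, v⁻ ≤ v⁺, then the point (x⁻, v⁻ − x⁻) belongs to O. -/
theorem stmt3 (xm xp ym yp um up vm vp : ℝ)
    (hxm : xm = max xm (max (vm - yp) (max (ym - up) ((vm - up) / 2))))
    (hxp : xp = min xp (min (vp - ym) (min (yp - um) ((vp - um) / 2))))
    (hym : ym = max ym (max (um + xm) (max (vm - xp) ((um + vm) / 2))))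
    (hyp : yp = min yp (min (up + xp) (min (vp - xm) ((up + vp) / 2))))
    (hum : um = max um (max (ym - xp) (max (vm - 2 * xp) (2 * ym - vp))))
    (hup : up = min up (min (yp - xm) (min (vp - 2 * xm) (2 * yp - vm))))
    (hvm : vm = max vm (max (xm + ym) (max (um + 2 * xm) (2 * ym - up))))
    (hvp : vp = min vp (min (xp + yp) (min (up + 2 * xp) (2 * yp - um))))
    (hx : xm ≤ xp) (hy : ym ≤ yp) (hu : um ≤ up) (hv : vm ≤ vp) :
    (xm, vm - xm) ∈ Octa xm xp ym yp um up vm vp := by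
  have h1 : vm - yp ≤ xm := by
    rw [hxm]; exact le_max_of_le_right (le_max_left _ _)
  have h2 : (vm - up) / 2 ≤ xm := by
    rw [hxm]; exact le_max_of_le_right (le_max_of_le_right (le_max_right _ _))
  have h3 : xm + ym ≤ vm := by
    rw [hvm]; exact le_max_of_le_right (le_max_left _ _)
  have h4 : um + 2 * xm ≤ vm := by
    rw [hvm]; exact le_max_of_le_right (le_max_of_le_right (le_max_left _ _))
  simp only [Octa, Set.mem_setOf_eq]
  refine ⟨by linarith, by linarith, by linarith, by linarith,
    le_refl _, hx, by linarith, by linarith⟩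
end

section
/- Let O₁ = Octa(x₁⁻,x₁⁺,y₁⁻,y₁⁺,u₁⁻,u₁⁺,v₁⁻,v₁⁺) and O₂ = Octa(x₂⁻,x₂⁺,y₂⁻,y₂⁺,u₂⁻,u₂⁺,v₂⁻,v₂⁺) be arbitrary octagon regions. Then their relational composition O₁ ◇ O₂ is contained in Octa(x₃⁻,x₃⁺,y₃⁻,y₃⁺,u₃⁻,u₃⁺,v₃⁻,v₃⁺), where x₃⁻ = max(x₁⁻, x₂⁻ − u₁⁺, v₁⁻ − x₂⁺), x₃⁺ = min(x₁⁺, x₂⁺ − u₁⁻, v₁⁺ − x₂⁻), y₃⁻ = max(y₂⁻, u₂⁻ + y₁⁻, v₂⁻ − y₁⁺), y₃⁺ = min(y₂⁺, u₂⁺ + y₁⁺, v₂⁺ − y₁⁻), u₃⁻ = max(y₂⁻ − x₁⁺, u₂⁻ + u₁⁻, v₂⁻ − v₁⁺), u₃⁺ = min(y₂⁺ − x₁⁻, u₂⁺ + u₁⁺, v₂⁺ − v₁⁻), v₃⁻ = max(x₁⁻ + y₂⁻, u₂⁻ + v₁⁻, v₂⁻ − u₁⁺), v₃⁺ = min(x₁⁺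 + y₂⁺, u₂⁺ + v₁⁺, v₂⁺ − u₁⁻). -/
def comp (A B : Set (ℝ × ℝ)) : Set (ℝ × ℝ) :=
  {p : ℝ × ℝ | ∃ y : ℝ, (p.1, y) ∈ A ∧ (y, p.2) ∈ B}

theorem stmt4 (x1m x1p y1m y1p u1m u1p v1m v1p x2m x2p y2m y2p u2m u2p v2m v2p : ℝ) :
    comp (Octa x1m x1p y1m y1p u1m u1p v1m v1p) (Octa x2m x2p y2m y2p u2m u2p v2m v2p) ⊆
      Octa (max x1m (max (x2m - u1p) (v1m - x2p)))
           (min x1p (min (x2p - u1m) (v1p - x2m)))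
           (max y2m (max (u2m + y1m) (v2m - y1p)))
           (min y2p (min (u2p + y1p) (v2p - y1m)))
           (max (y2m - x1p) (max (u2m + u1m) (v2m - v1p)))
           (min (y2p - x1m) (min (u2p + u1p) (v2p - v1m)))
           (max (x1m + y2m) (max (u2m + v1m) (v2m - u1p)))
           (min (x1p + y2p) (min (u2p + v1p) (v2p - u1m))) := by
  rintro ⟨a, b⟩ ⟨y, ⟨h1, h2, h3, h4, h5, h6, h7, h8⟩, ⟨g1, g2, g3, g4, g5, g6, g7, g8⟩⟩
  simp only [Octa, Set.mem_setOf_eq] at *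
  refine ⟨?_, ?_, ?_, ?_, ?_, ?_, ?_, ?_⟩ <;>
    simp only [le_max_iff, max_le_iff, le_min_iff, min_le_iff] <;>
    (repeat' constructor) <;> linarith
end

section
/- Let O = Octa(x⁻,x⁺,y⁻,y⁺,u⁻,u⁺,v⁻,v⁺) with normalised parameters. Then O is reflexive over its domain, i.e. (x,x) ∈ O for all x ∈ [x⁻,x⁺], if and only if u⁻ ≤ 0 ≤ u⁺ and v⁻ ≤ 2x⁻ ≤ 2x⁺ ≤ v⁺. -/
theorem stmt8 (xm xp ym yp um up vm vp : ℝ)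
    (hxm : xm = max xm (max (vm - yp) (max (ym - up) ((vm - up) / 2))))
    (hxp : xp = min xp (min (vp - ym) (min (yp - um) ((vp - um) / 2))))
    (hym : ym = max ym (max (um + xm) (max (vm - xp) ((um + vm) / 2))))
    (hyp : yp = min yp (min (up + xp) (min (vp - xm) ((up + vp) / 2))))
    (hum : um = max um (max (ym - xp) (max (vm - 2 * xp) (2 * ym - vp))))
    (hup : up = min up (min (yp - xm) (min (vp - 2 * xm) (2 * yp - vm))))
    (hvm : vm = max vm (max (xm + ym) (max (um + 2 * xm) (2 * ym - up))))
    (hvp : vp = min vp (min (xp + yp) (min (up + 2 * xp) (2 * yp - um))))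
    (hx : xm ≤ xp) :
    (∀ x : ℝ, x ∈ Set.Icc xm xp → (x, x) ∈ Octa xm xp ym yp um up vm vp) ↔
      (um ≤ 0 ∧ 0 ≤ up ∧ vm ≤ 2 * xm ∧ 2 * xp ≤ vp) := by
  constructor
  · intro h
    obtain ⟨a1, a2, a3, _, _⟩ := h xm ⟨le_refl _, hx⟩
    obtain ⟨_, _, _, b4, _⟩ := h xp ⟨hx, le_refl _⟩
    refine ⟨by linarith, by linarith, by linarith, by linarith⟩
  · rintro ⟨h1, h2, h3, h4⟩ x ⟨hx1, hx2⟩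
    have e1 : xm + ym ≤ vm := by
      rw [hvm]; exact le_max_of_le_right (le_max_left _ _)
    have e2 : vp ≤ xp + yp := by
      rw [hvp]; exact min_le_of_right_le (min_le_left _ _)
    exact ⟨by linarith, by linarith, by linarith, by linarith,
      hx1, hx2, by linarith, by linarith⟩
end

section
/- Let O be an octagon with normalised parameters whose u-bounds satisfy u⁺ < 0 or u⁻ > 0. Then there exists k ∈ ℕ such that the k-fold relational composition O^(k) of O with itself is empty. -/
/-- `compPow O k` is the `(k+1)`-fold relational composition `O^(k+1)` of `O` with itself,
so `compPow O 0 = O^(1) = O`. -/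
def compPow (O : Set (ℝ × ℝ)) : ℕ → Set (ℝ × ℝ)
  | 0 => O
  | n + 1 => comp (compPow O n) O

/-- The eight parameters of an octagon are normalised. -/
def Normalised (xm xp ym yp um up vm vp : ℝ) : Prop :=
  xm = max xm (max (vm - yp) (max (ym - up) ((vm - up) / 2))) ∧
  xp = min xp (min (vp - ym) (min (yp - um) ((vp - um) / 2))) ∧
  ym = max ym (max (um + xm) (max (vm - xp) ((um + vm) / 2))) ∧
  yp = min yp (min (up + xp) (min (vp - xm) ((up + vp) / 2))) ∧
  um = max um (max (ym - xp) (max (vm - 2 * xp) (2 * ym - vp))) ∧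
  up = min up (min (yp - xm) (min (vp - 2 * xm) (2 * yp - vm))) ∧
  vm = max vm (max (xm + ym) (max (um + 2 * xm) (2 * ym - up))) ∧
  vp = min vp (min (xp + yp) (min (up + 2 * xp) (2 * yp - um)))

lemma key (xm xp ym yp um up vm vp : ℝ) :
    ∀ n : ℕ, ∀ p ∈ compPow (Octa xm xp ym yp um up vm vp) n,
      (n + 1 : ℝ) * um ≤ p.2 - p.1 ∧ p.2 - p.1 ≤ (n + 1 : ℝ) * up ∧
      xm ≤ p.1 ∧ p.1 ≤ xp ∧ ym ≤ p.2 ∧ p.2 ≤ yp := by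
  intro n
  induction n with
  | zero =>
    intro p hp
    obtain ⟨h1, h2, _, _, h5, h6, h7, h8⟩ := hp
    push_cast
    constructor
    · linarith
    exact ⟨by linarith, h5, h6, h7, h8⟩
  | succ n ih =>
    intro p hp
    obtain ⟨y, hy1, hy2⟩ := hp
    obtain ⟨a1, a2, a3, a4, _, _⟩ := ih (p.1, y) hy1
    obtain ⟨b1, b2, _, _, _, _, b7, b8⟩ := hy2
    push_cast
    refine ⟨by push_cast at a1; nlinarith, by push_cast at a2; nlinarith, a3, a4, b7, b8⟩

theorem stmt9 (xm xp ym yp um up vm vp : ℝ)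
    (hnorm : Normalised xm xp ym yp um up vm vp)
    (hu : up < 0 ∨ um > 0) :
    ∃ k : ℕ, compPow (Octa xm xp ym yp um up vm vp) k = ∅ := by
  rcases hu with hu | hu
  · obtain ⟨n, hn⟩ := exists_nat_gt ((ym - xp) / up)
    refine ⟨n, Set.eq_empty_iff_forall_notMem.2 fun p hp => ?_⟩
    obtain ⟨_, h2, _, h4, h5, _⟩ := key xm xp ym yp um up vm vp n p hp
    have hn' : (n + 1 : ℝ) * up < ym - xp := by
      rw [div_lt_iff_of_neg hu] at hn
      nlinarith
    linarith
  · obtain ⟨n, hn⟩ := exists_nat_gt ((yp - xm) / um)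
    refine ⟨n, Set.eq_empty_iff_forall_notMem.2 fun p hp => ?_⟩
    obtain ⟨h1, _, h3, _, _, h6⟩ := key xm xp ym yp um up vm vp n p hp
    have hn' : (yp - xm) < (n + 1 : ℝ) * um := by
      rw [div_lt_iff₀ hu] at hn
      nlinarith
    linarith
end

section
/- If O = Octa(x⁻,x⁺,y⁻,y⁺,u⁻,u⁺,v⁻,v⁺) with normalised parameters and v⁻ = v⁺ = v, so that x + y = v on O, then for all even l ≥ 2, O^(l) = {(x,x) | x ∈ [max(x⁻, v−x⁺), min(x⁺, v−x⁻)]}, and for all odd l ≥ 3, O^(l) = {(x, v−x) | x ∈ [max(x⁻, v−x⁺), min(x⁺, v−x⁻)]}. -/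
theorem stmt10 (xm xp v : ℝ)
    (O : Set (ℝ × ℝ))
    (hO : O = {p : ℝ × ℝ | p.2 = v - p.1 ∧ xm ≤ p.1 ∧ p.1 ≤ xp}) :
    (∀ l : ℕ, 2 ≤ l → Even l →
      compPow O (l - 1) =
        {p : ℝ × ℝ | p.2 = p.1 ∧ max xm (v - xp) ≤ p.1 ∧ p.1 ≤ min xp (v - xm)}) ∧
    (∀ l : ℕ, 3 ≤ l → Odd l →
      compPow O (l - 1) =
        {p : ℝ × ℝ | p.2 = v - p.1 ∧ max xm (v - xp) ≤ p.1 ∧ p.1 ≤ min xp (v - xm)}) := by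
  set D : Set (ℝ × ℝ) :=
    {p : ℝ × ℝ | p.2 = p.1 ∧ max xm (v - xp) ≤ p.1 ∧ p.1 ≤ min xp (v - xm)} with hD
  set A : Set (ℝ × ℝ) :=
    {p : ℝ × ℝ | p.2 = v - p.1 ∧ max xm (v - xp) ≤ p.1 ∧ p.1 ≤ min xp (v - xm)} with hA
  have h1 : comp O O = D := by
    ext p
    simp only [comp, hO, hD, Set.mem_setOf_eq, max_le_iff, le_min_iff]
    constructor
    · rintro ⟨y, ⟨hy, h1, h2⟩, ⟨hz, h3, h4⟩⟩
      subst hy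
      refine ⟨by linarith, ⟨h1, by linarith⟩, h2, by linarith⟩
    · rintro ⟨hz, ⟨h1, h2⟩, h3, h4⟩
      exact ⟨v - p.1, ⟨rfl, h1, h3⟩, by rw [hz]; ring_nf, by linarith, by linarith⟩
  have h2 : comp D O = A := by
    ext p
    simp only [comp, hO, hD, hA, Set.mem_setOf_eq, max_le_iff, le_min_iff]
    constructor
    · rintro ⟨y, ⟨hy, ⟨h1, h2⟩, h3, h4⟩, ⟨hz, h5, h6⟩⟩
      subst hy
      exact ⟨hz, ⟨h1, h2⟩, h3, h4⟩
    · rintro ⟨hz, ⟨h1, h2⟩, h3, h4⟩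
      exact ⟨p.1, ⟨rfl, ⟨h1, h2⟩, h3, h4⟩, hz, h1, h3⟩
  have h3 : comp A O = D := by
    ext p
    simp only [comp, hO, hD, hA, Set.mem_setOf_eq, max_le_iff, le_min_iff]
    constructor
    · rintro ⟨y, ⟨hy, ⟨ha1, ha2⟩, ha3, ha4⟩, ⟨hz, h5, h6⟩⟩
      subst hy
      refine ⟨by linarith, ⟨ha1, ha2⟩, ha3, ha4⟩
    · rintro ⟨hz, ⟨h1, h2⟩, h3, h4⟩
      refine ⟨v - p.1, ⟨rfl, ⟨h1, h2⟩, h3, h4⟩, by rw [hz]; ring_nf, by linarith, by linarith⟩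
  -- compPow O n = D if n odd, A if n even ≥ 2
  have key : ∀ m : ℕ, compPow O (2 * m + 1) = D ∧ compPow O (2 * m + 2) = A := by
    intro m
    induction m with
    | zero => exact ⟨h1, by rw [show compPow O 2 = comp (compPow O 1) O from rfl,
        show compPow O 1 = comp O O from rfl, h1, h2]⟩
    | succ k ih =>
      have e1 : compPow O (2 * (k + 1) + 1) = comp (compPow O (2 * k + 2)) O := by
        rw [show 2 * (k + 1) + 1 = (2 * k + 2) + 1 by ring]; rfl
      have e2 : compPow O (2 * (k + 1) + 2) = comp (compPow O (2 * (k + 1) + 1)) O := rfl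
      rw [e2, e1, ih.2, h3]
      exact ⟨rfl, h2⟩
  constructor
  · intro l hl hEven
    obtain ⟨m, hm⟩ := hEven
    have hm1 : 1 ≤ m := by omega
    have : l - 1 = 2 * (m - 1) + 1 := by omega
    rw [this]; exact (key (m - 1)).1
  · intro l hl hOdd
    obtain ⟨m, hm⟩ := hOdd
    have : l - 1 = 2 * (m - 1) + 2 := by omega
    rw [this]; exact (key (m - 1)).2
end

section
/- Let O = [x⁻,x⁺] × [y⁻,y⁺] be a nonempty box in ℝ². Then O ◇ O = O if and only if x⁺ ≥ y⁻ and x⁻ ≤ y⁺. -/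
theorem stmt12 (xm xp ym yp : ℝ) (hx : xm ≤ xp) (hy : ym ≤ yp) :
    comp (Set.Icc xm xp ×ˢ Set.Icc ym yp) (Set.Icc xm xp ×ˢ Set.Icc ym yp) =
        Set.Icc xm xp ×ˢ Set.Icc ym yp ↔ (ym ≤ xp ∧ xm ≤ yp) := by
  constructor
  · intro h
    have hmem : (xm, ym) ∈ comp (Set.Icc xm xp ×ˢ Set.Icc ym yp)
        (Set.Icc xm xp ×ˢ Set.Icc ym yp) := by
      rw [h]; exact ⟨⟨le_refl _, hx⟩, ⟨le_refl _, hy⟩⟩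
    obtain ⟨y, ⟨_, hy1⟩, ⟨hy2, _⟩⟩ := hmem
    exact ⟨le_trans hy1.1 hy2.2, le_trans hy2.1 hy1.2⟩
  · rintro ⟨h1, h2⟩
    ext ⟨x, z⟩
    constructor
    · rintro ⟨y, ⟨hx1, _⟩, ⟨_, hz⟩⟩
      exact ⟨hx1, hz⟩
    · rintro ⟨hx1, hz⟩
      exact ⟨max xm ym, ⟨hx1, ⟨le_max_right _ _, max_le h2 hy⟩⟩,
        ⟨⟨le_max_left _ _, max_le hx h1⟩, hz⟩⟩
end

section
/- For every finite knowledge graph G ⊆ E × R × E (E, R finite sets), there exists an octagon embedding γ assigning to each entity e a vector γ(e) ∈ ℝⁿ (with n = |R|·|E|) and to each relation r a coordinate-wise octagon region γ(r) ⊆ ℝ^{2n}, such that for all e, r, f: (e,r,f) ∈ G if and only if γ(e)⊕γ(f) ∈ γ(r). -/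
/-- A set of the plane is an octagon region. -/
def IsOcta (S : Set (ℝ × ℝ)) : Prop :=
  ∃ xm xp ym yp um up vm vp : ℝ, S = Octa xm xp ym yp um up vm vp

theorem stmt15 (E R : Type) [Fintype E] [Fintype R] (G : Set (E × R × E)) :
    ∃ (γ : E → (R × E → ℝ)) (O : R → (R × E → Set (ℝ × ℝ))),
      (∀ r i, IsOcta (O r i)) ∧
      ∀ e r f, (e, r, f) ∈ G ↔ ∀ i, (γ e i, γ f i) ∈ O r i := by
  classical
  refine ⟨fun e i => if e = i.2 then 0 else if (i.2, i.1, e) ∈ G then 1 else 2,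
    fun r i => if i.1 = r then
      (if (i.2, r, i.2) ∈ G then Octa 0 2 0 2 (-2) 1 0 4 else Octa 0 2 0 2 (-2) 1 1 4)
    else Octa 0 2 0 2 (-2) 2 0 4, ?_, ?_⟩
  · intro r i
    dsimp only
    split_ifs <;> exact ⟨_, _, _, _, _, _, _, _, rfl⟩
  · intro e r f
    constructor
    · rintro h ⟨r', a⟩
      dsimp only
      by_cases hr : r' = r
      · subst hr
        by_cases he : e = a <;> by_cases hf : f = a <;>
          simp only [he, hf, if_pos, if_neg, Octa, Set.mem_setOf_eq, if_true, if_false] <;>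
          split_ifs <;> simp_all <;> norm_num
      · simp only [Octa, Set.mem_setOf_eq, if_neg hr]
        split_ifs <;> norm_num
    · intro h
      have h1 := h (r, e)
      dsimp only at h1
      simp only [if_pos rfl, Octa, Set.mem_setOf_eq] at h1
      by_cases hf : f = e
      · subst hf
        by_cases hg : (f, r, f) ∈ G
        · exact hg
        · simp only [if_neg hg, if_pos rfl] at h1
          norm_num at h1
      · by_cases hg : (e, r, f) ∈ G
        · exact hg
        · exfalso
          simp only [if_pos rfl, if_neg hf, if_neg hg] at h1
          split_ifs at h1 <;> norm_num at h1
end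

section
/- Let K be a rule base consisting of the hierarchy rules s_i ⊑ r_j for all i ∈ {1,2,3,4} and j ∈ {1,2,3,4}\{i}, the intersection rule r₂ ∩ r₃ ∩ r₄ ⊑ s₁, and the mutual exclusion rule s₁ ∩ r₁ = ∅. Suppose each relation t ∈ {s₁,s₂,s₃,s₄,r₁,r₂,r₃,r₄} is assigned a nonempty region X_t ⊆ ℝ^{2n} of the coordinate-wise form X_t = {(x₁,…,x_n,y₁,…,y_n) | ∀i, (x_i,y_i) ∈ X_t^i} where each X_t^i ⊆ ℝ² is convex, and these regions satisfy all rules in K (hierarchy: X_{s_i} ⊆ X_{r_j}; intersection: X_{r₂} ∩ X_{r₃} ∩ X_{r₄} ⊆ X_{s₁}; exclusion: X_{s₁} ∩ X_{r₁} = ∅). Then a contradiction follows; i.e., some region among X_{s₁},…,X_{s₄} must be empty. -/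
/-- The coordinate-wise region of `ℝ^n × ℝ^n` determined by a family of planar regions. -/
def Reg {n : ℕ} (X : Fin n → Set (ℝ × ℝ)) : Set ((Fin n → ℝ) × (Fin n → ℝ)) :=
  {p | ∀ i, (p.1 i, p.2 i) ∈ X i}

theorem stmt19 (n : ℕ) (s r : Fin 4 → Fin n → Set (ℝ × ℝ))
    (hconv_s : ∀ i k, Convex ℝ (s i k)) (hconv_r : ∀ i k, Convex ℝ (r i k))
    (hne_s : ∀ i, (Reg (s i)).Nonempty) (hne_r : ∀ i, (Reg (r i)).Nonempty)
    (hier : ∀ i j : Fin 4, i ≠ j → Reg (s i) ⊆ Reg (r j))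
    (hinter : Reg (r 1) ∩ Reg (r 2) ∩ Reg (r 3) ⊆ Reg (s 0))
    (hexcl : Reg (s 0) ∩ Reg (r 0) = ∅) :
    False := by
  classical
  -- points in each Reg (s i)
  choose p hp using hne_s
  -- For each coordinate k, the four planar sets r i k have a common point, by Helly.
  have key : ∀ k : Fin n, (⋂ i ∈ (Finset.univ : Finset (Fin 4)), r i k).Nonempty := by
    intro k
    apply Convex.helly_theorem' (fun i _ => hconv_r i k)
    intro I hI hIcard
    have hcard : I.card < 4 := by
      have h2 : Module.finrank ℝ (ℝ × ℝ) = 2 := by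
        rw [Module.finrank_prod, Module.finrank_self]
      rw [h2] at hIcard
      omega
    -- there is some j ∉ I
    obtain ⟨j, hj⟩ : ∃ j : Fin 4, j ∉ I := by
      by_contra h
      push_neg at h
      have : (Finset.univ : Finset (Fin 4)) ⊆ I := fun x _ => h x
      have := Finset.card_le_card this
      simp at this
      omega
    refine ⟨(((p j).1 k), ((p j).2 k)), ?_⟩
    simp only [Set.mem_iInter]
    intro i hi
    have hij : j ≠ i := fun h => hj (h ▸ hi)
    exact (hier j i hij (hp j)) k
  choose q hq using key
  set P : (Fin n → ℝ) × (Fin n → ℝ) := (fun k => (q k).1, fun k => (q k).2) with hP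
  have hPr : ∀ i : Fin 4, P ∈ Reg (r i) := by
    intro i k
    have := hq k
    simp only [Set.mem_iInter] at this
    exact this i (Finset.mem_univ i)
  have h0 : P ∈ Reg (s 0) := hinter ⟨⟨hPr 1, hPr 2⟩, hPr 3⟩
  have : P ∈ Reg (s 0) ∩ Reg (r 0) := ⟨h0, hPr 0⟩
  rw [hexcl] at this
  exact this
end
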